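/- arXiv:2012.10753 — 3 statements merged into one kernel-verified Lean document; each statement's English description precedes it below -/
import Mathlib

section
/- The collection of (l^0)-sets, i.e., sets A ⊆ ω^ω such that every Laver tree T has a Laver subtree Q ⊆ T with [Q] ∩ A = ∅, forms a σ-ideal on the Baire space. -/
/-- A tree: a set of finite sequences closed under initial segments. -/
def IsTree {α : Type*} (T : Set (List α)) : Prop :=
  ∀ t ∈ T, ∀ n, t.take n ∈ T

/-- The body `[T]` of a tree. -/
def body {α : Type*} (T : Set (List α)) : Set (ℕ → α) :=
  {x | ∀ n, List.ofFn (fun i : Fin n => x i) ∈ T}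

/-- A Laver tree: a tree on `ω` with a stem (a node comparable with all nodes of the tree)
such that every node extending the stem has infinitely many immediate successors. -/
def LaverTree (T : Set (List ℕ)) : Prop :=
  IsTree T ∧ ∃ s ∈ T, (∀ t ∈ T, t <+: s ∨ s <+: t) ∧
    ∀ t ∈ T, s <+: t → {n : ℕ | t ++ [n] ∈ T}.Infinite

/-- `A` is an `(l⁰)`-set: every Laver tree has a Laver subtree whose body misses `A`. -/
def L0 (A : Set (ℕ → ℕ)) : Prop :=
  ∀ T, LaverTree T → ∃ Q ⊆ T, LaverTree Q ∧ body Q ∩ A = ∅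

/-!
If `A` is an `(l⁰)`-set, every Laver tree `R` with stem `s` has a Laver subtree with the *same*
stem `s` whose body misses `A`. Otherwise the nodes of `R` none of whose segments extending `s`
carries such a subtree form a Laver tree (infinitely many subtrees sitting at children of a node can be glued
into one at the node itself), and `(l⁰)` applied to that tree yields a subtree whose stem is such
a segment. Keeping the stem fixed, a Laver tree can be refined to avoid `A` without changing it
below any prescribed level. For a union `⋃ Aₙ` this gives a fusion sequence `Qₙ₊₁ ⊆ Qₙ`, equal
to `Qₙ` up to level `n`, with `[Qₙ₊₁] ∩ Aₙ = ∅`, and its intersection is again a Laver tree.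
-/

open Set

variable {α : Type*}

theorem List.prefix_of_comparable_of_length_le {u v : List α} (h : u <+: v ∨ v <+: u)
    (hl : u.length ≤ v.length) : u <+: v := by
  rcases h with h | h
  · exact h
  · rw [h.eq_of_length (le_antisymm h.length_le hl)]

theorem IsTree.mem_of_prefix {T : Set (List α)} (hT : IsTree T) {u v : List α} (huv : u <+: v)
    (hv : v ∈ T) : u ∈ T := by
  rw [List.prefix_iff_eq_take.1 huv]
  exact hT v hv _

def initSeg (x : ℕ → α) (n : ℕ) : List α :=
  List.ofFn fun i : Fin n => x i

@[simp]
theorem length_initSeg (x : ℕ → α) (n : ℕ) : (initSeg x n).length = n :=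
  List.length_ofFn

theorem take_initSeg (x : ℕ → α) {m n : ℕ} (h : m ≤ n) : (initSeg x n).take m = initSeg x m :=
  List.ext_get (by simp [h]) fun _ _ _ => by simp [initSeg]

theorem mem_body {T : Set (List α)} {x : ℕ → α} : x ∈ body T ↔ ∀ n, initSeg x n ∈ T :=
  Iff.rfl

theorem body_mono {S T : Set (List α)} (h : S ⊆ T) : body S ⊆ body T :=
  fun _ hx n => h (hx n)

structure HasLaverStem (T : Set (List α)) (s : List α) : Prop where
  isTree : IsTree T
  stem_mem : s ∈ T
  comparable : ∀ t ∈ T, t <+: s ∨ s <+: t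
  infinite_succ : ∀ t ∈ T, s <+: t → {a | t ++ [a] ∈ T}.Infinite

theorem laverTree_iff {T : Set (List ℕ)} : LaverTree T ↔ ∃ s, HasLaverStem T s :=
  ⟨fun ⟨h, s, hs, hc, hi⟩ => ⟨s, h, hs, hc, hi⟩, fun ⟨s, h, hs, hc, hi⟩ => ⟨h, s, hs, hc, hi⟩⟩

def localize (T : Set (List α)) (t : List α) : Set (List α) :=
  {u ∈ T | u <+: t ∨ t <+: u}

theorem HasLaverStem.localize {T : Set (List α)} {s t : List α} (hT : HasLaverStem T s)
    (ht : t ∈ T) (hst : s <+: t) : HasLaverStem (localize T t) t where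
  isTree u hu k := by
    refine ⟨hT.isTree u hu.1 k, ?_⟩
    rcases hu.2 with hut | htu
    · exact Or.inl ((u.take_prefix k).trans hut)
    · exact List.prefix_or_prefix_of_prefix (u.take_prefix k) htu
  stem_mem := ⟨ht, Or.inl (List.prefix_refl t)⟩
  comparable _ hu := hu.2
  infinite_succ u hu htu := (hT.infinite_succ u hu.1 (hst.trans htu)).mono
    fun _ ha => ⟨ha, Or.inr (htu.trans (List.prefix_append u _))⟩

theorem HasLaverStem.prefix_stem_of_subset {Q R : Set (List α)} {s w : List α}
    (hQ : HasLaverStem Q w) (hQR : Q ⊆ R) (hR : ∀ u ∈ R, u <+: s ∨ s <+: u) : s <+: w := by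
  by_contra hsw
  -- a node strictly below `s` has at most one child in `R`
  have hchild : ∀ a, w ++ [a] ∈ Q → w ++ [a] <+: s := fun a ha => by
    rcases hR _ (hQR ha) with h | h
    · exact h
    · rcases List.prefix_concat_iff.1 h with h | h
      · exact h ▸ List.prefix_refl s
      · exact absurd h hsw
  refine hQ.infinite_succ w hQ.stem_mem (List.prefix_refl w) (Subsingleton.finite ?_)
  intro a ha b hb
  simpa using List.prefix_of_prefix_length_le (hchild a ha) (hchild b hb) (by simp)

/-- Below level `ℓ` the glued tree is `U`; a longer node `u` continues inside the tree attached
to its level-`ℓ` segment `u.take ℓ`. -/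
def glue (U : Set (List α)) (ℓ : ℕ) (S : List α → Set (List α)) : Set (List α) :=
  {u | u.take ℓ ∈ U ∧ (ℓ < u.length → u ∈ S (u.take ℓ))}

section Glue

variable {U : Set (List α)} {ℓ : ℕ} {S : List α → Set (List α)}

theorem mem_glue_of_length_le {u : List α} (h : u.length ≤ ℓ) : u ∈ glue U ℓ S ↔ u ∈ U := by
  simp [glue, List.take_of_length_le h, h]

variable (hS : ∀ t ∈ U, t.length = ℓ → HasLaverStem (S t) t)
include hS

theorem mem_glue_of_le_length {u : List α} (h : ℓ ≤ u.length) :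
    u ∈ glue U ℓ S ↔ u.take ℓ ∈ U ∧ u ∈ S (u.take ℓ) := by
  refine ⟨fun ⟨hu, hu'⟩ => ⟨hu, ?_⟩, fun ⟨hu, hu'⟩ => ⟨hu, fun _ => hu'⟩⟩
  rcases h.lt_or_eq with h | h
  · exact hu' h
  · rw [List.take_of_length_le h.ge] at hu ⊢
    exact (hS u hu h.symm).stem_mem

theorem glue_subset {R : Set (List α)} (hUR : U ⊆ R) (hSR : ∀ t ∈ U, t.length = ℓ → S t ⊆ R) :
    glue U ℓ S ⊆ R := by
  intro u hu
  rcases le_total u.length ℓ with h | h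
  · exact hUR ((mem_glue_of_length_le h).1 hu)
  · obtain ⟨hu, hu'⟩ := (mem_glue_of_le_length hS h).1 hu
    exact hSR _ hu (by simp [h]) hu'

theorem isTree_glue (hU : IsTree U) : IsTree (glue U ℓ S) := by
  rintro u ⟨hu, hu'⟩ k
  rcases le_or_gt k ℓ with hk | hk
  · have hlen := (u.length_take_le k).trans hk
    refine (mem_glue_of_length_le hlen).2 ?_
    rw [← List.take_of_length_le hlen, List.take_take, min_comm, ← List.take_take]
    exact hU _ hu k
  · have htake : (u.take k).take ℓ = u.take ℓ := by rw [List.take_take, min_eq_left hk.le]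
    refine ⟨htake ▸ hu, fun hlen => ?_⟩
    have hlen' : ℓ < u.length := hlen.trans_le (List.length_take_le' k u)
    rw [htake]
    exact (hS _ hu (by simp [hlen'.le])).isTree u (hu' hlen') k

theorem hasLaverStem_glue (hU : IsTree U) {s : List α} (hs : s ∈ U)
    (hcomp : ∀ u ∈ U, u <+: s ∨ s <+: u) (hsℓ : s.length ≤ ℓ)
    (hsucc : ∀ u ∈ U, s <+: u → u.length < ℓ → {a | u ++ [a] ∈ U}.Infinite) :
    HasLaverStem (glue U ℓ S) s where
  isTree := isTree_glue hS hU
  stem_mem := (mem_glue_of_length_le hsℓ).2 hs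
  comparable u hu := by
    rcases le_total u.length ℓ with h | h
    · exact hcomp u ((mem_glue_of_length_le h).1 hu)
    · have htu := ((mem_glue_of_le_length hS h).1 hu).1
      refine Or.inr ((List.prefix_of_comparable_of_length_le (hcomp _ htu).symm ?_).trans
        (u.take_prefix ℓ))
      simpa [h] using hsℓ
  infinite_succ u hu hsu := by
    rcases lt_or_ge u.length ℓ with h | h
    · refine (hsucc u ((mem_glue_of_length_le h.le).1 hu) hsu h).mono fun a ha => ?_
      exact (mem_glue_of_length_le (by simpa using h)).2 ha
    · obtain ⟨ht, hut⟩ := (mem_glue_of_le_length hS h).1 hu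
      have hSt := hS _ ht (by simp [h])
      refine (hSt.infinite_succ u hut (u.take_prefix ℓ)).mono fun a ha => ?_
      have htake : (u ++ [a]).take ℓ = u.take ℓ := List.take_append_of_le_length h
      exact (mem_glue_of_le_length hS (by simp; omega)).2 ⟨htake ▸ ht, htake ▸ ha⟩

theorem mem_body_of_mem_body_glue {x : ℕ → α} (hx : x ∈ body (glue U ℓ S)) :
    initSeg x ℓ ∈ U ∧ x ∈ body (S (initSeg x ℓ)) := by
  have hmem : ∀ {k}, ℓ ≤ k → initSeg x ℓ ∈ U ∧ initSeg x k ∈ S (initSeg x ℓ) := fun hk => by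
    have h := (mem_glue_of_le_length hS (by simpa using hk)).1 (mem_body.1 hx _)
    rwa [take_initSeg x hk] at h
  have hSx := hS _ (hmem le_rfl).1 (length_initSeg x ℓ)
  refine ⟨(hmem le_rfl).1, mem_body.2 fun k => ?_⟩
  rcases le_total k ℓ with hk | hk
  · rw [← take_initSeg x hk]
    exact hSx.isTree _ hSx.stem_mem k
  · exact (hmem hk).2

end Glue

def HasAvoidingSubtree (R : Set (List α)) (A : Set (ℕ → α)) (t : List α) : Prop :=
  ∃ S ⊆ R, HasLaverStem S t ∧ body S ∩ A = ∅

theorem HasAvoidingSubtree.mono {R R' : Set (List α)} {A : Set (ℕ → α)} {t : List α}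
    (h : HasAvoidingSubtree R A t) (hRR' : R ⊆ R') : HasAvoidingSubtree R' A t :=
  let ⟨S, hSR, hS, hSA⟩ := h
  ⟨S, hSR.trans hRR', hS, hSA⟩

theorem exists_avoiding_glue {R U : Set (List α)} {A : Set (ℕ → α)} {s : List α} {ℓ : ℕ}
    (hU : IsTree U) (hUR : U ⊆ R) (hs : s ∈ U) (hcomp : ∀ u ∈ U, u <+: s ∨ s <+: u)
    (hsℓ : s.length ≤ ℓ)
    (hsucc : ∀ u ∈ U, s <+: u → u.length < ℓ → {a | u ++ [a] ∈ U}.Infinite)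
    (hfront : ∀ t ∈ U, t.length = ℓ → HasAvoidingSubtree R A t) :
    ∃ Q ⊆ R, HasLaverStem Q s ∧ body Q ∩ A = ∅ ∧ ∀ u ∈ U, u.length ≤ ℓ → u ∈ Q := by
  choose! S hSR hS hSA using hfront
  refine ⟨glue U ℓ S, glue_subset hS hUR hSR, hasLaverStem_glue hS hU hs hcomp hsℓ hsucc,
    eq_empty_of_forall_notMem fun x ⟨hx, hxA⟩ => ?_,
    fun u hu hl => (mem_glue_of_length_le hl).2 hu⟩
  obtain ⟨ht, hxS⟩ := mem_body_of_mem_body_glue hS hx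
  exact (hSA _ ht (length_initSeg x ℓ)).subset ⟨hxS, hxA⟩

theorem hasAvoidingSubtree_of_infinite {R : Set (List α)} {A : Set (ℕ → α)} {t : List α}
    (hG : {a | HasAvoidingSubtree R A (t ++ [a])}.Infinite) : HasAvoidingSubtree R A t := by
  set G := {a | HasAvoidingSubtree R A (t ++ [a])}
  obtain ⟨Q, hQR, hQ, hQA, -⟩ := exists_avoiding_glue (U := {u | ∃ a ∈ G, u <+: t ++ [a]})
    (ℓ := t.length + 1) (s := t)
    (fun u ⟨a, ha, hu⟩ k => ⟨a, ha, (u.take_prefix k).trans hu⟩)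
    (fun u ⟨a, ⟨S, hSR, hS, _⟩, hu⟩ => hSR (hS.isTree.mem_of_prefix hu hS.stem_mem))
    (hG.nonempty.elim fun a ha => ⟨a, ha, List.prefix_append t [a]⟩)
    (fun u ⟨a, _, hu⟩ => List.prefix_or_prefix_of_prefix hu (List.prefix_append t [a]))
    (Nat.le_succ _)
    (fun u _ htu hu => by
      rw [← htu.eq_of_length (by have := htu.length_le; omega)]
      exact hG.mono fun a ha => ⟨a, ha, List.prefix_refl _⟩)
    (fun u ⟨a, ha, hu⟩ hl => by rwa [hu.eq_of_length (by simpa using hl)])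
  exact ⟨Q, hQR, hQ, hQA⟩

def badSubtree (R : Set (List α)) (A : Set (ℕ → α)) (s : List α) : Set (List α) :=
  {u ∈ R | ∀ w, s <+: w → w <+: u → ¬ HasAvoidingSubtree R A w}

theorem hasLaverStem_badSubtree {R : Set (List α)} {A : Set (ℕ → α)} {s : List α}
    (hR : HasLaverStem R s) (hs : ¬ HasAvoidingSubtree R A s) :
    HasLaverStem (badSubtree R A s) s where
  isTree u hu k := ⟨hR.isTree u hu.1 k, fun w hsw hwu => hu.2 w hsw (hwu.trans (u.take_prefix k))⟩
  stem_mem := ⟨hR.stem_mem, fun w hsw hws => hsw.eq_of_length (le_antisymm hsw.length_le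
    hws.length_le) ▸ hs⟩
  comparable u hu := hR.comparable u hu.1
  infinite_succ u hu hsu := by
    have hfin : {a | HasAvoidingSubtree R A (u ++ [a])}.Finite := not_infinite.1 fun h =>
      hu.2 u hsu (List.prefix_refl u) (hasAvoidingSubtree_of_infinite h)
    refine ((hR.infinite_succ u hu.1 hsu).sdiff hfin).mono ?_
    rintro a ⟨haR, hbad⟩
    refine ⟨haR, fun w hsw hwu => ?_⟩
    rcases List.prefix_concat_iff.1 hwu with rfl | hwu
    · exact hbad
    · exact hu.2 w hsw hwu

theorem L0.hasAvoidingSubtree {A : Set (ℕ → ℕ)} (hA : L0 A) {R : Set (List ℕ)} {s : List ℕ}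
    (hR : HasLaverStem R s) : HasAvoidingSubtree R A s := by
  by_contra hs
  have hB := hasLaverStem_badSubtree hR hs
  obtain ⟨Q, hQB, hQ, hQA⟩ := hA _ (laverTree_iff.2 ⟨s, hB⟩)
  obtain ⟨w, hw⟩ := laverTree_iff.1 hQ
  have hsw : s <+: w := hw.prefix_stem_of_subset hQB hB.comparable
  exact (hQB hw.stem_mem).2 w hsw (List.prefix_refl w) ⟨Q, hQB.trans (sep_subset _ _), hw, hQA⟩

theorem L0.exists_refinement {A : Set (ℕ → ℕ)} (hA : L0 A) {Q : Set (List ℕ)} {s : List ℕ}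
    (hQ : HasLaverStem Q s) (ℓ : ℕ) :
    ∃ Q' ⊆ Q, HasLaverStem Q' s ∧ body Q' ∩ A = ∅ ∧ ∀ u ∈ Q, u.length ≤ ℓ → u ∈ Q' := by
  have hfront : ∀ t ∈ Q, t.length = ℓ + s.length → HasAvoidingSubtree Q A t := fun t ht hl =>
    have hst : s <+: t := List.prefix_of_comparable_of_length_le (hQ.comparable t ht).symm (by omega)
    (hA.hasAvoidingSubtree (hQ.localize ht hst)).mono (sep_subset _ _)
  obtain ⟨Q', hQ'Q, hQ', hQ'A, hkeep⟩ := exists_avoiding_glue hQ.isTree subset_rfl hQ.stem_mem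
    hQ.comparable (Nat.le_add_left _ _) (fun u hu hsu _ => hQ.infinite_succ u hu hsu) hfront
  exact ⟨Q', hQ'Q, hQ', hQ'A, fun u hu hl => hkeep u hu (by omega)⟩

section Fusion

variable {Q : ℕ → Set (List α)} (hanti : ∀ n, Q (n + 1) ⊆ Q n)
  (hkeep : ∀ n, ∀ u ∈ Q n, u.length ≤ n → u ∈ Q (n + 1))
include hanti hkeep

theorem mem_iInter_of_mem_length {u : List α} (hu : u ∈ Q u.length) : u ∈ ⋂ n, Q n := by
  refine mem_iInter.2 fun n => ?_
  rcases le_total n u.length with h | h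
  · exact antitone_nat_of_succ_le hanti h hu
  · induction n, h using Nat.le_induction with
    | base => exact hu
    | succ n hn ih => exact hkeep n u ih hn

theorem HasLaverStem.iInter {s : List α} (hQ : ∀ n, HasLaverStem (Q n) s) :
    HasLaverStem (⋂ n, Q n) s where
  isTree u hu k := mem_iInter.2 fun n => (hQ n).isTree u (mem_iInter.1 hu n) k
  stem_mem := mem_iInter.2 fun n => (hQ n).stem_mem
  comparable u hu := (hQ 0).comparable u (mem_iInter.1 hu 0)
  infinite_succ u hu hsu :=
    ((hQ (u.length + 1)).infinite_succ u (mem_iInter.1 hu _) hsu).mono fun _ ha =>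
      mem_iInter_of_mem_length hanti hkeep (by simpa using ha)

end Fusion

theorem L0.subset {A B : Set (ℕ → ℕ)} (hB : L0 B) (hAB : A ⊆ B) : L0 A := fun T hT =>
  let ⟨Q, hQT, hQ, hQB⟩ := hB T hT
  ⟨Q, hQT, hQ, subset_empty_iff.1 (hQB ▸ inter_subset_inter_right _ hAB)⟩

theorem L0.iUnion {f : ℕ → Set (ℕ → ℕ)} (hf : ∀ n, L0 (f n)) : L0 (⋃ n, f n) := by
  intro T hT
  obtain ⟨s, hTs⟩ := laverTree_iff.1 hT
  choose! next hsub hnext hnext_avoid hkeep using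
    fun n (Q : Set (List ℕ)) (hQ : HasLaverStem Q s) => (hf n).exists_refinement hQ n
  let Q : ℕ → Set (List ℕ) := fun n => Nat.rec T next n
  have hQ : ∀ n, HasLaverStem (Q n) s := fun n => Nat.rec hTs (fun n ih => hnext n _ ih) n
  refine ⟨⋂ n, Q n, iInter_subset Q 0, laverTree_iff.2 ⟨s, HasLaverStem.iInter
    (fun n => hsub n _ (hQ n)) (fun n => hkeep n _ (hQ n)) hQ⟩, ?_⟩
  refine eq_empty_of_forall_notMem fun x ⟨hx, hxf⟩ => ?_
  obtain ⟨n, hxn⟩ := mem_iUnion.1 hxf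
  exact (hnext_avoid n _ (hQ n)).subset ⟨body_mono (iInter_subset Q (n + 1)) hx, hxn⟩

/-- The `(l⁰)`-sets form a σ-ideal on Baire space: they are closed under subsets and
under countable unions. -/
theorem l0_sigma_ideal :
    (∀ A B : Set (ℕ → ℕ), A ⊆ B → L0 B → L0 A) ∧
    (∀ f : ℕ → Set (ℕ → ℕ), (∀ n, L0 (f n)) → L0 (⋃ n, f n)) :=
  ⟨fun _ _ hAB hB => hB.subset hAB, fun _ => L0.iUnion⟩
end

section
/- The collection of nowhere Ramsey sets forms a σ-ideal on [ω]^ω: it is closed under subsets and under countable unions. -/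
/-- The basic Ellentuck set `[a, A] = {B ∈ [ω]^ω : a ⊆ B ⊆ a ∪ A}`. -/
def ELset (a : Finset ℕ) (A : Set ℕ) : Set (Set ℕ) :=
  {B | B.Infinite ∧ ↑a ⊆ B ∧ B ⊆ ↑a ∪ A}

/-- `M` is nowhere Ramsey: for every `[a, A]` there is an infinite `B ⊆ A` with
`[a, B] ∩ M = ∅`. -/
def NowhereRamsey (M : Set (Set ℕ)) : Prop :=
  ∀ (a : Finset ℕ) (A : Set ℕ), A.Infinite →
    ∃ B ⊆ A, B.Infinite ∧ ELset a B ∩ M = ∅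

lemma ELset_mono {c : Finset ℕ} {B B' : Set ℕ} (h : B ⊆ B') :
    ELset c B ⊆ ELset c B' := fun D hD =>
  ⟨hD.1, hD.2.1, hD.2.2.trans (Set.union_subset_union_right _ h)⟩

lemma shrink_list {f : ℕ → Set (Set ℕ)} (hf : ∀ n, NowhereRamsey (f n)) :
    ∀ (L : List (Finset ℕ × ℕ)) (A : Set ℕ), A.Infinite →
      ∃ B ⊆ A, B.Infinite ∧ ∀ p ∈ L, ELset p.1 B ∩ f p.2 = ∅ := by
  intro L
  induction L with
  | nil => exact fun A hA => ⟨A, subset_rfl, hA, by simp⟩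
  | cons p L ih =>
    intro A hA
    obtain ⟨B, hBA, hB, hBL⟩ := ih A hA
    obtain ⟨C, hCB, hC, hCp⟩ := hf p.2 p.1 B hB
    refine ⟨C, hCB.trans hBA, hC, ?_⟩
    intro q hq
    rcases List.mem_cons.mp hq with rfl | hq
    · exact hCp
    · exact Set.eq_empty_of_subset_empty
        ((Set.inter_subset_inter_left _ (ELset_mono hCB)).trans (hBL q hq).subset)

lemma le_foldr_max : ∀ (l : List ℕ), ∀ x ∈ l, x ≤ l.foldr max 0 := by
  intro l
  induction l with
  | nil => simp
  | cons y l ih =>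
    intro x hx
    rcases List.mem_cons.mp hx with rfl | hx
    · exact le_max_left _ _
    · exact (ih x hx).trans (le_max_right _ _)

/-- The nowhere Ramsey sets form a σ-ideal on `[ω]^ω`: they are closed under subsets
and under countable unions. -/
theorem nowhereRamsey_sigma_ideal :
    (∀ M N : Set (Set ℕ), M ⊆ N → NowhereRamsey N → NowhereRamsey M) ∧
    (∀ f : ℕ → Set (Set ℕ), (∀ n, NowhereRamsey (f n)) → NowhereRamsey (⋃ n, f n)) := by
  classical
  constructor
  · intro M N hMN hN a A hA
    obtain ⟨B, hBA, hB, hE⟩ := hN a A hA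
    exact ⟨B, hBA, hB, Set.eq_empty_of_subset_empty
      ((Set.inter_subset_inter_right _ hMN).trans hE.subset)⟩
  · intro f hf a A hA
    -- step existence
    have hstep : ∀ (l : List ℕ) (S : Set ℕ), ∃ (n : ℕ) (S' : Set ℕ),
        S.Infinite → (S' ⊆ S ∧ S'.Infinite ∧ n ∈ S' ∧ (∀ x ∈ l, x < n) ∧
          ∀ s ∈ l.toFinset.powerset, ∀ m ≤ l.length, ELset (a ∪ s) S' ∩ f m = ∅) := by
      intro l S
      by_cases hS : S.Infinite
      · set L : List (Finset ℕ × ℕ) :=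
          ((l.toFinset.powerset ×ˢ Finset.range (l.length + 1)).toList).map
            (fun p => (a ∪ p.1, p.2)) with hL
        obtain ⟨B, hBS, hB, hBL⟩ := shrink_list hf L S hS
        obtain ⟨N, hNB, hN⟩ := hB.exists_gt (l.foldr max 0)
        refine ⟨N, B, fun _ => ⟨hBS, hB, hNB, ?_, ?_⟩⟩
        · exact fun x hx => lt_of_le_of_lt (le_foldr_max l x hx) hN
        · intro s hs m hm
          refine hBL (a ∪ s, m) ?_
          rw [hL, List.mem_map]
          refine ⟨(s, m), ?_, rfl⟩
          rw [Finset.mem_toList, Finset.mem_product]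
          exact ⟨hs, Finset.mem_range.mpr (Nat.lt_succ_of_le hm)⟩
      · exact ⟨0, ∅, fun h => absurd h hS⟩
    choose F1 F2 hF using hstep
    set g : ℕ → List ℕ × Set ℕ :=
      fun k => Nat.rec ([], A) (fun _ st => (st.1 ++ [F1 st.1 st.2], F2 st.1 st.2)) k with hg
    set nn : ℕ → ℕ := fun k => F1 (g k).1 (g k).2 with hnn
    have hgs : ∀ k, g (k + 1) = ((g k).1 ++ [nn k], F2 (g k).1 (g k).2) := fun k => rfl
    -- invariants
    have inv : ∀ k, (g k).2.Infinite ∧ (g k).2 ⊆ A ∧ (g k).1 = (List.range k).map nn := by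
      intro k
      induction k with
      | zero => exact ⟨hA, subset_rfl, rfl⟩
      | succ k ih =>
        obtain ⟨h1, h2, h3, h4, h5⟩ := hF (g k).1 (g k).2 ih.1
        rw [hgs]
        refine ⟨h2, h1.trans ih.2.1, ?_⟩
        rw [ih.2.2, List.range_succ, List.map_append]
        rfl
    have hspec : ∀ k, F2 (g k).1 (g k).2 ⊆ (g k).2 ∧ (F2 (g k).1 (g k).2).Infinite ∧
        nn k ∈ F2 (g k).1 (g k).2 ∧ (∀ x ∈ (g k).1, x < nn k) ∧
        ∀ s ∈ (g k).1.toFinset.powerset, ∀ m ≤ (g k).1.length,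
          ELset (a ∪ s) (F2 (g k).1 (g k).2) ∩ f m = ∅ :=
      fun k => hF (g k).1 (g k).2 (inv k).1
    have hchain : ∀ k, (g (k + 1)).2 ⊆ (g k).2 := by
      intro k; rw [hgs]; exact (hspec k).1
    have hmono : ∀ k j, k ≤ j → (g j).2 ⊆ (g k).2 := by
      intro k j hkj
      induction j, hkj using Nat.le_induction with
      | base => exact subset_rfl
      | succ j hkj ih => exact (hchain j).trans ih
    have hnmem : ∀ k, nn k ∈ (g (k + 1)).2 := by
      intro k; rw [hgs]; exact (hspec k).2.2.1
    have hnlt : StrictMono nn := by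
      apply strictMono_nat_of_lt_succ
      intro k
      refine (hspec (k + 1)).2.2.2.1 (nn k) ?_
      rw [hgs]; exact List.mem_append_right _ (List.mem_singleton.mpr rfl)
    have hmemlist : ∀ j k, j < k → nn j ∈ (g k).1 := by
      intro j k hjk
      rw [(inv k).2.2, List.mem_map]
      exact ⟨j, List.mem_range.mpr hjk, rfl⟩
    have hkey : ∀ k (s : Finset ℕ), ↑s ⊆ {x | x ∈ (g k).1} → ∀ m ≤ k,
        ELset (a ∪ s) (g (k + 1)).2 ∩ f m = ∅ := by
      intro k s hs m hm
      rw [hgs]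
      refine (hspec k).2.2.2.2 s ?_ m ?_
      · rw [Finset.mem_powerset]
        intro x hx
        exact List.mem_toFinset.mpr (hs hx)
      · rw [(inv k).2.2, List.length_map, List.length_range]; exact hm
    refine ⟨Set.range nn, ?_, Set.infinite_range_of_injective hnlt.injective, ?_⟩
    · rintro x ⟨k, rfl⟩
      exact (inv (k + 1)).2.1 (hnmem k)
    · rw [Set.eq_empty_iff_forall_notMem]
      rintro D ⟨⟨hDinf, haD, hDaB⟩, hDU⟩
      obtain ⟨_, ⟨m, rfl⟩, hDm⟩ := hDU
      set s : Finset ℕ := (g m).1.toFinset.filter (fun x => x ∈ D) with hs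
      have hsub : ↑s ⊆ {x | x ∈ (g m).1} := by
        intro x hx
        rw [hs] at hx
        simp only [Finset.coe_filter, Set.mem_setOf_eq, List.mem_toFinset] at hx
        exact hx.1
      have hempty := hkey m s hsub m le_rfl
      rw [Set.eq_empty_iff_forall_notMem] at hempty
      refine hempty D ⟨⟨hDinf, ?_, ?_⟩, hDm⟩
      · rw [Finset.coe_union]
        refine Set.union_subset haD ?_
        intro x hx
        rw [hs] at hx
        simp only [Finset.coe_filter, Set.mem_setOf_eq] at hx
        exact hx.2
      · intro x hx
        rcases hDaB hx with hxa | hxB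
        · exact Or.inl (by rw [Finset.coe_union]; exact Or.inl hxa)
        · obtain ⟨j, rfl⟩ := hxB
          by_cases hjm : j < m
          · refine Or.inl ?_
            rw [Finset.coe_union]
            refine Or.inr ?_
            rw [hs]
            simp only [Finset.coe_filter, Set.mem_setOf_eq, List.mem_toFinset]
            exact ⟨List.mem_toFinset.mp (List.mem_toFinset.mpr (hmemlist j m hjm)), hx⟩
          · exact Or.inr (hmono (m + 1) (j + 1) (by omega) (hnmem j))
end

section
/- Let M ⊆ [ω]^ω not be nowhere Ramsey, and let 𝓕 be a point-finite cover of M by nowhere Ramsey sets. Suppose for every Ellentuck basic set [a, A] with M ∩ [a, A] ≠ ∅ there is an Ellentuck basic set [b, B] ⊆ [a, A] (with M ∩ [b, B] ≠ ∅) such that {F ∩ [b, B] : F ∈ 𝓕} has cardinality continuum. Then there exists a subfamily 𝓕' ⊆ 𝓕 such that ⋃𝓕' is not completely Ramsey. -/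
/-!
Assume every union of members of `𝓕` is completely Ramsey. As `M` is not nowhere Ramsey, there
is `[a, A]` all of whose refinements `[a, B]` meet `M`; by the Galvin–Prikry diagonal argument
this positivity survives, after shrinking `A`, the addition of any new point to the stem.

Inside a positive `[c, D]`, fewer than `𝔠` members of `𝓕`, all outside a prescribed family of
fewer than `𝔠` members, cover some `[c, B]`. To see this, enumerate the infinite `B ⊆ D` in order
type `𝔠`; as long as `[c, B_i]` is not covered by the members chosen so far, pick a point
`y_i ∈ [c, B_i]` outside them and a new member `F_i` meeting `[c, B_i]` and missing every `y_j`,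
`j ≤ i`. This is possible because `𝓕` has `𝔠` traces below `[c, B_i]`, while by point-finiteness
fewer than `𝔠` members contain some `y_j`. If no `[c, B_i]` were ever covered, the union of all
`F_i` would neither contain nor miss any `[c, B_i]`, so it would not be completely Ramsey.

Iterating along a fusion sequence with growing stems yields a set lying in a member of each of
infinitely many pairwise disjoint subfamilies of `𝓕`, contradicting point-finiteness.
-/

open Cardinal

/-- `M` is completely Ramsey. -/
def CompletelyRamsey (M : Set (Set ℕ)) : Prop :=
  ∀ (a : Finset ℕ) (A : Set ℕ), A.Infinite →
    ∃ B ⊆ A, B.Infinite ∧ (ELset a B ⊆ M ∨ ELset a B ∩ M = ∅)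

/-- A family of sets is point-finite if every point lies in only finitely many members. -/
def PointFinite {X : Type*} (F : Set (Set X)) : Prop :=
  ∀ x : X, {G ∈ F | x ∈ G}.Finite

open Set Function

def RamseyPositive (M : Set (Set ℕ)) (a : Finset ℕ) (A : Set ℕ) : Prop :=
  ∀ B ⊆ A, B.Infinite → (M ∩ ELset a B).Nonempty

def ContinuumTraces (M : Set (Set ℕ)) (𝓕 : Set (Set (Set ℕ))) : Prop :=
  ∀ (a : Finset ℕ) (A : Set ℕ), A.Infinite → (M ∩ ELset a A).Nonempty →
    ∃ (b : Finset ℕ) (B : Set ℕ), B.Infinite ∧ ELset b B ⊆ ELset a A ∧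
      (M ∩ ELset b B).Nonempty ∧
      #{S : Set (Set ℕ) | ∃ F ∈ 𝓕, S = F ∩ ELset b B} = continuum

lemma ELset_insert_subset {a : Finset ℕ} {A B : Set ℕ} {d : ℕ} (hd : d ∈ B) (hAB : A ⊆ B) :
    ELset (insert d a) A ⊆ ELset a B := by
  rintro X ⟨hX, haX, hXA⟩
  rw [Finset.coe_insert] at haX hXA
  exact ⟨hX, (subset_insert d _).trans haX,
    hXA.trans (union_subset (insert_subset (Or.inr hd) subset_union_left)
      (hAB.trans subset_union_right))⟩

lemma not_completelyRamsey_of_forall {U : Set (Set ℕ)} {c : Finset ℕ} {D : Set ℕ}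
    (hD : D.Infinite)
    (h : ∀ B ⊆ D, B.Infinite → (U ∩ ELset c B).Nonempty ∧ ¬ ELset c B ⊆ U) :
    ¬ CompletelyRamsey U := by
  intro hU
  obtain ⟨B, hBD, hB, hcov | hdisj⟩ := hU c D hD
  · exact (h B hBD hB).2 hcov
  · exact (h B hBD hB).1.ne_empty (inter_comm U _ ▸ hdisj)

lemma exists_seq_of_forall_exists {σ : Type*} {I : σ → Prop} {R : σ → σ → Prop}
    (h : ∀ s, I s → ∃ t, I t ∧ R s t) {s₀ : σ} (h₀ : I s₀) :
    ∃ f : ℕ → σ, ∀ n, I (f n) ∧ R (f n) (f (n + 1)) := by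
  choose g hgI hgR using fun s : {s // I s} => h s.1 s.2
  let f : ℕ → {s // I s} := fun n => (fun s => ⟨g s, hgI s⟩)^[n] ⟨s₀, h₀⟩
  refine ⟨fun n => (f n).1, fun n => ⟨(f n).2, ?_⟩⟩
  simp only [f, iterate_succ_apply']
  exact hgR _

lemma exists_transfinite_choice {ι α : Type*} [Preorder ι] [WellFoundedLT ι] [Nonempty α]
    (R : ι → Set α → α → Prop) :
    ∃ g : ι → α, ∀ i, (∃ a, R i (g '' Iio i) a) → R i (g '' Iio i) (g i) := by
  let g : ι → α := wellFounded_lt.fix fun i rec =>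
    Classical.epsilon (R i (range fun j : Iio i => rec j j.2))
  refine ⟨g, fun i h => ?_⟩
  have hg : g i = Classical.epsilon (R i (g '' Iio i)) := by
    rw [image_eq_range]
    exact WellFounded.fix_eq _ _ _
  exact hg ▸ Classical.epsilon_spec h

lemma exists_surjective_ord_toType {α : Type*} [Nonempty α] {κ : Cardinal} (h : #α ≤ κ) :
    ∃ π : κ.ord.ToType → α, Surjective π := by
  obtain ⟨e⟩ : #α ≤ #κ.ord.ToType := by simpa using h
  exact ⟨invFun e, invFun_surjective e.injective⟩

def IsFusionSeq (d : ℕ → ℕ) (D : ℕ → Set ℕ) : Prop :=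
  ∀ n, d n ∈ D n ∧ D (n + 1) ⊆ D n \ {d n}

namespace IsFusionSeq

variable {d : ℕ → ℕ} {D : ℕ → Set ℕ}

lemma antitone (h : IsFusionSeq d D) : Antitone D :=
  antitone_nat_of_succ_le fun n => (h n).2.trans sdiff_subset

lemma mem_of_le (h : IsFusionSeq d D) {m n : ℕ} (hmn : m ≤ n) : d n ∈ D m :=
  h.antitone hmn (h n).1

lemma injective (h : IsFusionSeq d D) : Injective d :=
  .of_lt_imp_ne fun m _ hmn hdn => ((h m).2 (h.mem_of_le hmn)).2 hdn.symm

lemma iUnion_mem_ELset (h : IsFusionSeq d D) {c : ℕ → Finset ℕ}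
    (hc : ∀ n, c (n + 1) = insert (d n) (c n)) (n : ℕ) :
    (⋃ m, (c m : Set ℕ)) ∈ ELset (c n) (D n) := by
  have hd : ∀ m, d m ∈ c (m + 1) := fun m => hc m ▸ Finset.mem_insert_self _ _
  have hmono : Monotone c := monotone_nat_of_le_succ fun m => hc m ▸ Finset.subset_insert _ _
  refine ⟨infinite_of_injective_forall_mem h.injective fun m => mem_iUnion.2 ⟨m + 1, hd m⟩,
    subset_iUnion (fun m => (c m : Set ℕ)) n, iUnion_subset fun m => ?_⟩
  induction m with
  | zero => exact (Finset.coe_subset.2 (hmono (Nat.zero_le n))).trans subset_union_left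
  | succ m ih =>
    rw [hc m, Finset.coe_insert]
    refine insert_subset ?_ ih
    rcases lt_or_ge m n with hmn | hnm
    · exact Or.inl (hmono hmn (hd m))
    · exact Or.inr (h.mem_of_le hnm)

end IsFusionSeq

lemma PointFinite.mk_setOf_exists_mem_le {X : Type*} {𝓕 : Set (Set X)} (hpf : PointFinite 𝓕)
    (Z : Set X) : #{F ∈ 𝓕 | ∃ z ∈ Z, z ∈ F} ≤ #Z * ℵ₀ := by
  have hZ : {F ∈ 𝓕 | ∃ z ∈ Z, z ∈ F} = ⋃ z ∈ Z, {F ∈ 𝓕 | z ∈ F} := by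
    ext F
    simp
  rw [hZ]
  calc #(⋃ z ∈ Z, {F ∈ 𝓕 | z ∈ F}) ≤ #Z * ⨆ z : Z, #{F ∈ 𝓕 | z.1 ∈ F} := mk_biUnion_le _ Z
    _ ≤ #Z * ℵ₀ := by
      gcongr
      exact ciSup_le' fun z => le_aleph0_iff_set_countable.2 (hpf z.1).countable

lemma PointFinite.not_forall_mem_sUnion {X : Type*} {𝓕 : Set (Set X)} (hpf : PointFinite 𝓕)
    {𝓐 : ℕ → Set (Set X)} (h𝓐 : ∀ n, 𝓐 n ⊆ 𝓕) (hdisj : Pairwise (Disjoint on 𝓐)) (x : X) :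
    ¬ ∀ n, x ∈ ⋃₀ 𝓐 n := by
  intro hx
  choose G hG hxG using hx
  have hinj : Injective G := fun m n hGmn => by_contra fun hmn =>
    (hdisj hmn).ne_of_mem (hG m) (hGmn ▸ hG n) rfl
  exact infinite_range_of_injective hinj
    ((hpf x).subset (range_subset_iff.2 fun n => ⟨h𝓐 n (hG n), hxG n⟩))

variable {M : Set (Set ℕ)} {𝓕 : Set (Set (Set ℕ))}

lemma RamseyPositive.mono {a : Finset ℕ} {A B : Set ℕ} (h : RamseyPositive M a A) (hBA : B ⊆ A) :
    RamseyPositive M a B :=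
  fun C hCB hC => h C (hCB.trans hBA) hC

lemma exists_ramseyPositive_of_not_nowhereRamsey (hM : ¬ NowhereRamsey M) :
    ∃ (a : Finset ℕ) (A : Set ℕ), A.Infinite ∧ RamseyPositive M a A := by
  simp only [NowhereRamsey, not_forall, not_exists, not_and] at hM
  obtain ⟨a, A, hA, hpos⟩ := hM
  exact ⟨a, A, hA, fun B hBA hB => inter_comm (ELset a B) M ▸
    nonempty_iff_ne_empty.2 (hpos B hBA hB)⟩

lemma RamseyPositive.exists_forall_insert {s : Finset ℕ} {A : Set ℕ} (hA : A.Infinite)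
    (hpos : RamseyPositive M s A) :
    ∃ A' ⊆ A, A'.Infinite ∧ ∀ b ∈ A', RamseyPositive M (insert b s) A' := by
  by_contra! hcon
  have step : ∀ C : Set ℕ, C ⊆ A ∧ C.Infinite → ∃ C', (C' ⊆ A ∧ C'.Infinite) ∧
      ∃ b ∈ C, C' ⊆ C \ {b} ∧ M ∩ ELset (insert b s) C' = ∅ := by
    rintro C ⟨hCA, hC⟩
    obtain ⟨b, hb, hneg⟩ := hcon C hCA hC
    simp only [RamseyPositive, not_forall, not_nonempty_iff_eq_empty] at hneg
    obtain ⟨B, hBC, hB, hempty⟩ := hneg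
    refine ⟨B \ {b}, ⟨sdiff_subset.trans (hBC.trans hCA), hB.sdiff (finite_singleton b)⟩,
      b, hb, sdiff_subset_sdiff_left hBC, subset_empty_iff.1 ?_⟩
    exact hempty ▸ inter_subset_inter_right M fun X ⟨hX, hbX, hXB⟩ =>
      ⟨hX, hbX, hXB.trans (union_subset_union_right _ sdiff_subset)⟩
  obtain ⟨C, hC⟩ := exists_seq_of_forall_exists step ⟨subset_rfl, hA⟩
  choose b hbC hCb hempty using fun n => (hC n).2
  have hfus : IsFusionSeq b C := fun n => ⟨hbC n, hCb n⟩
  obtain ⟨X, hXM, hX, hsX, hXs⟩ := hpos (range b)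
    (range_subset_iff.2 fun n => (hC n).1.1 (hbC n)) (infinite_range_of_injective hfus.injective)
  have hex : ∃ n, b n ∈ X := by
    obtain ⟨x, hxX, hxs⟩ := (hX.sdiff s.finite_toSet).nonempty
    obtain ⟨n, rfl⟩ := (hXs hxX).resolve_left hxs
    exact ⟨n, hxX⟩
  classical
  -- `X` enters the diagonal sequence at its first element `b n` outside `s`.
  refine eq_empty_iff_forall_notMem.1 (hempty (Nat.find hex)) X ⟨hXM, hX, ?_, fun x hx => ?_⟩
  · rw [Finset.coe_insert]
    exact insert_subset (Nat.find_spec hex) hsX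
  · rw [Finset.coe_insert]
    rcases hXs hx with hxs | ⟨m, rfl⟩
    · exact Or.inl (Or.inr hxs)
    rcases lt_trichotomy m (Nat.find hex) with hlt | rfl | hgt
    · exact absurd hx (Nat.find_min hex hlt)
    · exact Or.inl (Or.inl rfl)
    · exact Or.inr (hfus.mem_of_le hgt)

lemma ContinuumTraces.exists_mem_inter_nonempty (htr : ContinuumTraces M 𝓕) {a : Finset ℕ}
    {A : Set ℕ} (hA : A.Infinite) (hM : (M ∩ ELset a A).Nonempty) {𝓔 : Set (Set (Set ℕ))}
    (h𝓔 : #𝓔 < 𝔠) : ∃ F ∈ 𝓕, F ∉ 𝓔 ∧ (F ∩ ELset a A).Nonempty := by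
  by_contra! hcon
  obtain ⟨b, B, -, hBA, -, htraces⟩ := htr a A hA hM
  have hsub : {S : Set (Set ℕ) | ∃ F ∈ 𝓕, S = F ∩ ELset b B} ⊆
      insert ∅ ((· ∩ ELset b B) '' 𝓔) := by
    rintro _ ⟨F, hF, rfl⟩
    by_cases hF𝓔 : F ∈ 𝓔
    · exact Or.inr ⟨F, hF𝓔, rfl⟩
    · exact Or.inl (subset_empty_iff.1 (hcon F hF hF𝓔 ▸ inter_subset_inter_right F hBA))
  refine (mk_le_mk_of_subset hsub).not_gt ?_
  rw [htraces]
  exact mk_insert_le.trans_lt (add_lt_of_lt aleph0_le_continuum (mk_image_le.trans_lt h𝓔)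
    (one_lt_aleph0.trans aleph0_lt_continuum))

lemma exists_mem_avoiding (hpf : PointFinite 𝓕) (htr : ContinuumTraces M 𝓕) {a : Finset ℕ}
    {A : Set ℕ} (hA : A.Infinite) (hM : (M ∩ ELset a A).Nonempty) {𝓔 : Set (Set (Set ℕ))}
    (h𝓔 : #𝓔 < 𝔠) {Z : Set (Set ℕ)} (hZ : #Z < 𝔠) :
    ∃ F ∈ 𝓕, F ∉ 𝓔 ∧ (∀ z ∈ Z, z ∉ F) ∧ (F ∩ ELset a A).Nonempty := by
  have hforb : #(𝓔 ∪ {F ∈ 𝓕 | ∃ z ∈ Z, z ∈ F} : Set (Set (Set ℕ))) < 𝔠 :=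
    (mk_union_le _ _).trans_lt (add_lt_of_lt aleph0_le_continuum h𝓔
      ((hpf.mk_setOf_exists_mem_le Z).trans_lt
        (mul_lt_of_lt aleph0_le_continuum hZ aleph0_lt_continuum)))
  obtain ⟨F, hF, hFforb, hne⟩ := htr.exists_mem_inter_nonempty hA hM hforb
  exact ⟨F, hF, fun h => hFforb (Or.inl h), fun z hz hzF => hFforb (Or.inr ⟨hF, z, hz, hzF⟩), hne⟩

-- `S` holds the pairs (member, point) chosen at the earlier stages of a transfinite construction.
def IsStageChoice (𝓕 𝓔 : Set (Set (Set ℕ))) (c : Finset ℕ) (B : Set ℕ)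
    (S : Set (Set (Set ℕ) × Set ℕ)) (p : Set (Set ℕ) × Set ℕ) : Prop :=
  p.2 ∈ ELset c B ∧ p.2 ∉ ⋃₀ (Prod.fst '' S) ∧ p.1 ∈ 𝓕 ∧ p.1 ∉ 𝓔 ∧
    (∀ q ∈ insert p S, q.2 ∉ p.1) ∧ (p.1 ∩ ELset c B).Nonempty

lemma exists_isStageChoice (hpf : PointFinite 𝓕) (htr : ContinuumTraces M 𝓕) {c : Finset ℕ}
    {B : Set ℕ} (hB : B.Infinite) (hM : (M ∩ ELset c B).Nonempty) {𝓔 : Set (Set (Set ℕ))}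
    (h𝓔 : #𝓔 < 𝔠) {S : Set (Set (Set ℕ) × Set ℕ)} (hS : #S < 𝔠)
    (hcov : ¬ ELset c B ⊆ ⋃₀ (Prod.fst '' S)) : ∃ p, IsStageChoice 𝓕 𝓔 c B S p := by
  obtain ⟨y, hy, hyS⟩ := not_subset.1 hcov
  obtain ⟨F, hF, hF𝓔, hFZ, hne⟩ := exists_mem_avoiding hpf htr hB hM h𝓔
    (Z := insert y (Prod.snd '' S)) (mk_insert_le.trans_lt (add_lt_of_lt aleph0_le_continuum
      (mk_image_le.trans_lt hS) (one_lt_aleph0.trans aleph0_lt_continuum)))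
  refine ⟨(F, y), hy, hyS, hF, hF𝓔, ?_, hne⟩
  rintro q (rfl | hq)
  · exact hFZ _ (mem_insert _ _)
  · exact hFZ _ (mem_insert_of_mem _ (mem_image_of_mem _ hq))

lemma exists_small_subfamily_covering (hCR : ∀ 𝓖 ⊆ 𝓕, CompletelyRamsey (⋃₀ 𝓖))
    (hpf : PointFinite 𝓕) (htr : ContinuumTraces M 𝓕) {c : Finset ℕ} {D : Set ℕ}
    (hD : D.Infinite) (hpos : RamseyPositive M c D) {𝓔 : Set (Set (Set ℕ))} (h𝓔 : #𝓔 < 𝔠) :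
    ∃ B ⊆ D, B.Infinite ∧ ∃ 𝓐 ⊆ 𝓕, Disjoint 𝓐 𝓔 ∧ #𝓐 < 𝔠 ∧ ELset c B ⊆ ⋃₀ 𝓐 := by
  have : Nonempty {B : Set ℕ // B ⊆ D ∧ B.Infinite} := ⟨⟨D, subset_rfl, hD⟩⟩
  obtain ⟨π, hπ⟩ := exists_surjective_ord_toType
    ((mk_subtype_le fun B : Set ℕ => B ⊆ D ∧ B.Infinite).trans mk_set_nat.le)
  obtain ⟨g, hg⟩ := exists_transfinite_choice fun i => IsStageChoice 𝓕 𝓔 c (π i).1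
  have hsmall : ∀ i, #(g '' Iio i) < 𝔠 := fun i => mk_image_le.trans_lt (by simpa using mk_Iio_lt i)
  have hR : ∀ i, ¬ ELset c (π i).1 ⊆ ⋃₀ (Prod.fst '' (g '' Iio i)) →
      IsStageChoice 𝓕 𝓔 c (π i).1 (g '' Iio i) (g i) := fun i hi =>
    hg i (exists_isStageChoice hpf htr (π i).2.2 (hpos _ (π i).2.1 (π i).2.2) h𝓔 (hsmall i) hi)
  by_cases hopen : ∀ i, ¬ ELset c (π i).1 ⊆ ⋃₀ (Prod.fst '' (g '' Iio i))
  · refine absurd (hCR (range fun i => (g i).1) ?_) (not_completelyRamsey_of_forall (c := c) hD ?_)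
    · rintro _ ⟨i, rfl⟩
      exact (hR i (hopen i)).2.2.1
    intro B hBD hB
    obtain ⟨i, hi⟩ := hπ ⟨B, hBD, hB⟩
    obtain ⟨hy, hyS, -, -, hyF, hne⟩ := hR i (hopen i)
    rw [hi] at hy hne
    -- earlier members miss `y_i` by the choice of `y_i`, the others by their own choice
    refine ⟨hne.mono (inter_subset_inter_left _ (subset_sUnion_of_mem ⟨i, rfl⟩)), fun hcov => ?_⟩
    obtain ⟨_, ⟨j, rfl⟩, hyj⟩ := hcov hy
    rcases lt_or_ge j i with hji | hij
    · exact hyS ⟨(g j).1, mem_image_of_mem _ (mem_image_of_mem _ hji), hyj⟩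
    · refine (hR j (hopen j)).2.2.2.2.1 (g i) ?_ hyj
      rcases hij.eq_or_lt with rfl | hij
      · exact mem_insert _ _
      · exact mem_insert_of_mem _ (mem_image_of_mem _ hij)
  · simp only [not_forall, not_not] at hopen
    -- at the first covered stage, all earlier choices succeeded
    obtain ⟨i, hcov, hmin⟩ := wellFounded_lt.has_min _ hopen
    have hRj : ∀ j < i, IsStageChoice 𝓕 𝓔 c (π j).1 (g '' Iio j) (g j) := fun j hj =>
      hR j fun h => hmin j h hj
    refine ⟨(π i).1, (π i).2.1, (π i).2.2, Prod.fst '' (g '' Iio i), ?_, ?_,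
      mk_image_le.trans_lt (hsmall i), hcov⟩
    · rintro _ ⟨_, ⟨j, hj, rfl⟩, rfl⟩
      exact (hRj j hj).2.2.1
    · refine disjoint_left.2 ?_
      rintro _ ⟨_, ⟨j, hj, rfl⟩, rfl⟩
      exact (hRj j hj).2.2.2.1

lemma exists_fusion_step (hCR : ∀ 𝓖 ⊆ 𝓕, CompletelyRamsey (⋃₀ 𝓖)) (hpf : PointFinite 𝓕)
    (htr : ContinuumTraces M 𝓕) {c : Finset ℕ} {D : Set ℕ} (hD : D.Infinite)
    (hpos : RamseyPositive M c D) {𝓔 : Set (Set (Set ℕ))} (h𝓔 : #𝓔 < 𝔠) :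
    ∃ d ∈ D, ∃ D' ⊆ D \ {d}, D'.Infinite ∧ RamseyPositive M (insert d c) D' ∧
      ∃ 𝓐 ⊆ 𝓕, Disjoint 𝓐 𝓔 ∧ #𝓐 < 𝔠 ∧ ELset (insert d c) D' ⊆ ⋃₀ 𝓐 := by
  obtain ⟨B, hBD, hB, 𝓐, h𝓐, hdisj, hcard, hcov⟩ :=
    exists_small_subfamily_covering hCR hpf htr hD hpos h𝓔
  obtain ⟨A, hAB, hA, hins⟩ := (hpos.mono hBD).exists_forall_insert hB
  obtain ⟨d, hd⟩ := hA.nonempty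
  exact ⟨d, hBD (hAB hd), A \ {d}, sdiff_subset_sdiff_left (hAB.trans hBD),
    hA.sdiff (finite_singleton d), (hins d hd).mono sdiff_subset, 𝓐, h𝓐, hdisj, hcard,
    (ELset_insert_subset (hAB hd) (sdiff_subset.trans hAB)).trans hcov⟩

lemma exists_disjoint_subfamilies_covering_fusion (hCR : ∀ 𝓖 ⊆ 𝓕, CompletelyRamsey (⋃₀ 𝓖))
    (hpf : PointFinite 𝓕) (htr : ContinuumTraces M 𝓕) {a : Finset ℕ} {A : Set ℕ}
    (hA : A.Infinite) (hpos : RamseyPositive M a A) :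
    ∃ (c : ℕ → Finset ℕ) (D : ℕ → Set ℕ) (d : ℕ → ℕ) (𝓐 : ℕ → Set (Set (Set ℕ))),
      IsFusionSeq d D ∧ (∀ n, c (n + 1) = insert (d n) (c n)) ∧ (∀ n, 𝓐 n ⊆ 𝓕) ∧
      Pairwise (Disjoint on 𝓐) ∧ ∀ n, ELset (c (n + 1)) (D (n + 1)) ⊆ ⋃₀ 𝓐 n := by
  -- the state `(c, D, 𝓔)` records the current basic set and the members used so far
  let I : Finset ℕ × Set ℕ × Set (Set (Set ℕ)) → Prop := fun s =>
    s.2.1.Infinite ∧ RamseyPositive M s.1 s.2.1 ∧ #s.2.2 < 𝔠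
  have step : ∀ s, I s → ∃ t, I t ∧ ∃ d ∈ s.2.1, t.2.1 ⊆ s.2.1 \ {d} ∧ t.1 = insert d s.1 ∧
      ∃ 𝓐 ⊆ 𝓕, Disjoint 𝓐 s.2.2 ∧ t.2.2 = s.2.2 ∪ 𝓐 ∧ ELset t.1 t.2.1 ⊆ ⋃₀ 𝓐 := by
    rintro ⟨c, D, 𝓔⟩ ⟨hD, hpos, h𝓔⟩
    obtain ⟨d, hd, D', hD'D, hD', hpos', 𝓐, h𝓐, hdisj, hcard, hcov⟩ :=
      exists_fusion_step hCR hpf htr hD hpos h𝓔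
    exact ⟨(insert d c, D', 𝓔 ∪ 𝓐), ⟨hD', hpos', (mk_union_le _ _).trans_lt
      (add_lt_of_lt aleph0_le_continuum h𝓔 hcard)⟩, d, hd, hD'D, rfl, 𝓐, h𝓐, hdisj, rfl, hcov⟩
  obtain ⟨s, hs⟩ := exists_seq_of_forall_exists step
    (show I (a, A, ∅) from ⟨hA, hpos, by simpa using continuum_pos⟩)
  choose d hd hD hc 𝓐 h𝓐 hdisj h𝓔 hcov using fun n => (hs n).2
  have hmono : Monotone fun n => (s n).2.2 :=
    monotone_nat_of_le_succ fun n => (h𝓔 n).symm ▸ subset_union_left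
  refine ⟨fun n => (s n).1, fun n => (s n).2.1, d, 𝓐, fun n => ⟨hd n, hD n⟩, hc, h𝓐,
    .of_lt fun m n hmn => (hdisj n).symm.mono_left ?_, hcov⟩
  calc 𝓐 m ⊆ (s (m + 1)).2.2 := h𝓔 m ▸ subset_union_right
    _ ⊆ (s n).2.2 := hmono hmn

theorem exists_subfamily_not_completelyRamsey_general (M : Set (Set ℕ))
    (hM : ¬ NowhereRamsey M)
    (𝓕 : Set (Set (Set ℕ))) (hpf : PointFinite 𝓕)
    (hbig : ∀ (a : Finset ℕ) (A : Set ℕ), A.Infinite → (M ∩ ELset a A).Nonempty →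
      ∃ (b : Finset ℕ) (B : Set ℕ), B.Infinite ∧ ELset b B ⊆ ELset a A ∧
        (M ∩ ELset b B).Nonempty ∧
        #{S : Set (Set ℕ) | ∃ F ∈ 𝓕, S = F ∩ ELset b B} = continuum) :
    ∃ 𝓕' ⊆ 𝓕, ¬ CompletelyRamsey (⋃₀ 𝓕') := by
  by_contra! hCR
  obtain ⟨a, A, hA, hpos⟩ := exists_ramseyPositive_of_not_nowhereRamsey hM
  obtain ⟨c, D, d, 𝓐, hfus, hc, h𝓐, hdisj, hcov⟩ :=
    exists_disjoint_subfamilies_covering_fusion hCR hpf hbig hA hpos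
  exact hpf.not_forall_mem_sUnion h𝓐 hdisj _ fun n => hcov n (hfus.iUnion_mem_ELset hc (n + 1))

/-- If `M` is not nowhere Ramsey, `𝓕` is a point-finite cover of `M` by nowhere Ramsey
sets, and every Ellentuck basic set meeting `M` contains a basic set meeting `M` on which
the restricted family has cardinality continuum, then some subfamily `𝓕' ⊆ 𝓕` has a
union that is not completely Ramsey. -/
theorem exists_subfamily_not_completelyRamsey (M : Set (Set ℕ))
    (hM : ¬ NowhereRamsey M)
    (𝓕 : Set (Set (Set ℕ))) (hpf : PointFinite 𝓕)
    (hmem : ∀ F ∈ 𝓕, NowhereRamsey F) (hcov : M ⊆ ⋃₀ 𝓕)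
    (hbig : ∀ (a : Finset ℕ) (A : Set ℕ), A.Infinite → (M ∩ ELset a A).Nonempty →
      ∃ (b : Finset ℕ) (B : Set ℕ), B.Infinite ∧ ELset b B ⊆ ELset a A ∧
        (M ∩ ELset b B).Nonempty ∧
        #{S : Set (Set ℕ) | ∃ F ∈ 𝓕, S = F ∩ ELset b B} = continuum) :
    ∃ 𝓕' ⊆ 𝓕, ¬ CompletelyRamsey (⋃₀ 𝓕') :=
  exists_subfamily_not_completelyRamsey_general M hM 𝓕 hpf hbig
end
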